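/- arXiv:2106.10742 — 2 statements merged into one kernel-verified Lean document; each statement's English description precedes it below -/
import Mathlib

section
/- Let A be an abelian category with enough projectives and let M, N be objects of A. Then N belongs to the subprojectivity domain of M if and only if for every epimorphism g : K → N and every morphism f : M → N, the epimorphism g' : D → M arising from the pullback (D, g', f') of g and f splits. -/
open CategoryTheory CategoryTheory.Limits

universe v u

/-- `N` belongs to the subprojectivity domain of `M`: every morphism `M ⟶ N` factors
through a projective object. -/
def SubprojDomain {A : Type u} [Category.{v} A] (M N : A) : Prop :=
  ∀ f : M ⟶ N, ∃ (P : A) (_ : Projective P) (a : M ⟶ P) (b : P ⟶ N), a ≫ b = f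

/-- `N` is in the subprojectivity domain of `M` iff for every epimorphism
`g : K ⟶ N` and every morphism `f : M ⟶ N`, the projection `g' : D ⟶ M` of the pullback
of `g` and `f` splits. -/
theorem subprojDomain_iff_pullback_splits
    {A : Type u} [Category.{v} A] [Abelian A] [EnoughProjectives A] (M N : A) :
    SubprojDomain M N ↔
    (∀ (K : A) (g : K ⟶ N), Epi g → ∀ f : M ⟶ N,
      ∃ s : M ⟶ pullback f g, s ≫ pullback.fst f g = 𝟙 M) := by
  constructor
  · intro hsub K g hg f
    obtain ⟨P, hP, a, b, hab⟩ := hsub f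
    have : Epi g := hg
    obtain ⟨h, hh⟩ := Projective.factors (P := P) b g
    exact ⟨pullback.lift (𝟙 M) (a ≫ h) (by simp [← hab, ← hh]), pullback.lift_fst _ _ _⟩
  · intro hpb f
    obtain ⟨s, hs⟩ := hpb (Projective.over N) (Projective.π N) inferInstance f
    exact ⟨Projective.over N, inferInstance, s ≫ pullback.snd f (Projective.π N),
      Projective.π N, by rw [Category.assoc, ← pullback.condition, ← Category.assoc, hs, Category.id_comp]⟩
end

section
/- Let A be an abelian category with enough projectives and M, N objects of A. If there exists an epimorphism g : P → N with P belonging to the subprojectivity domain of M, such that for every morphism f : M → N the pullback projection g' : D → M of g along f splits, then N belongs to the subprojectivity domain of M. -/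
open CategoryTheory CategoryTheory.Limits

universe v u

/-- if there is an epimorphism `g : P ⟶ N` with `P` in the subprojectivity
domain of `M` such that for every `f : M ⟶ N` the pullback projection `D ⟶ M` splits,
then `N` is in the subprojectivity domain of `M`. -/
theorem subprojDomain_of_pullback_splits
    {A : Type u} [Category.{v} A] [Abelian A] [EnoughProjectives A] (M N : A)
    (P : A) (g : P ⟶ N) (hg : Epi g) (hP : SubprojDomain M P)
    (hsplit : ∀ f : M ⟶ N, ∃ s : M ⟶ pullback f g, s ≫ pullback.fst f g = 𝟙 M) :
    SubprojDomain M N := by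
  intro f
  obtain ⟨s, hs⟩ := hsplit f
  obtain ⟨Q, hQ, a, b, hab⟩ := hP (s ≫ pullback.snd f g)
  refine ⟨Q, hQ, a, b ≫ g, ?_⟩
  rw [← Category.assoc, hab, Category.assoc, ← pullback.condition, ← Category.assoc, hs,
    Category.id_comp]
end
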